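/- arXiv:1410.0839 — 8 statements merged into one kernel-verified Lean document; each statement's English description precedes it below -/
import Mathlib

section
/- Let n ≥ 1 and identify a 'cube' in the discrete torus (ℤ/4ℤ)^n with a translate v + {0,1}^n for v ∈ (ℤ/4ℤ)^n. Two cubes v + {0,1}^n and w + {0,1}^n are disjoint if and only if there exists a coordinate i such that v_i - w_i = 2 in ℤ/4ℤ. -/
/-- The cube `v + {0,1}^n` in the discrete torus `(ℤ/4ℤ)^n`. -/
def cube {n : ℕ} (v : Fin n → ZMod 4) : Set (Fin n → ZMod 4) :=
  {x | ∀ i, x i = v i ∨ x i = v i + 1}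

/-! A cube is the product of the edges `{v i, v i + 1}`, and two products of nonempty sets are
disjoint exactly when some pair of factors is; on the cycle `ℤ/4ℤ` two edges are disjoint
exactly when they are opposite. -/

theorem cube_eq_pi {n : ℕ} (v : Fin n → ZMod 4) :
    cube v = Set.univ.pi fun i => ({v i, v i + 1} : Set (ZMod 4)) := by
  ext x
  simp [cube]

theorem ZMod.disjoint_pair_add_one_iff (a b : ZMod 4) :
    Disjoint ({a, a + 1} : Set (ZMod 4)) {b, b + 1} ↔ a - b = 2 := by
  simp only [Set.disjoint_insert_left, Set.disjoint_insert_right, Set.disjoint_singleton,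
    Set.mem_insert_iff, Set.mem_singleton_iff]
  revert a b
  decide

theorem cubes_disjoint_iff_general {n : ℕ} (v w : Fin n → ZMod 4) :
    Disjoint (cube v) (cube w) ↔ ∃ i, v i - w i = 2 := by
  simp only [cube_eq_pi, Set.disjoint_univ_pi, ZMod.disjoint_pair_add_one_iff]

theorem cubes_disjoint_iff {n : ℕ} (hn : 1 ≤ n) (v w : Fin n → ZMod 4) :
    Disjoint (cube v) (cube w) ↔ ∃ i, v i - w i = 2 :=
  cubes_disjoint_iff_general v w
end

section
/- For n = 2, every non-extensible cube packing of the discrete torus (ℤ/4ℤ)^2 is a tiling, i.e., consists of exactly 4 pairwise disjoint cubes covering the torus. -/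
theorem exists_mem_pair_inter_pair_iff (a b : ZMod 4) :
    (∃ c, (c = a ∨ c = a + 1) ∧ (c = b ∨ c = b + 1)) ↔ b ≠ a + 2 := by
  revert a b; decide

section Cube

variable {n : ℕ}

theorem disjoint_cube_iff {v w : Fin n → ZMod 4} :
    Disjoint (cube v) (cube w) ↔ ∃ i, w i = v i + 2 := by
  rw [← not_iff_not, Set.not_disjoint_iff, not_exists]
  simp only [cube, Set.mem_ofPred_eq, ← forall_and]
  exact Classical.skolem.symm.trans
    (forall_congr' fun i => exists_mem_pair_inter_pair_iff (v i) (w i))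

def cubeFinset (v : Fin n → ZMod 4) : Finset (Fin n → ZMod 4) :=
  Fintype.piFinset fun i => {v i, v i + 1}

@[simp]
theorem coe_cubeFinset (v : Fin n → ZMod 4) :
    (cubeFinset v : Set (Fin n → ZMod 4)) = cube v := by
  ext x; simp [cubeFinset, cube]

theorem card_cubeFinset (v : Fin n → ZMod 4) : (cubeFinset v).card = 2 ^ n := by
  have (a : ZMod 4) : ({a, a + 1} : Finset (ZMod 4)).card = 2 := Finset.card_pair (by grind)
  simp [cubeFinset, this]

variable {P : Finset (Fin n → ZMod 4)}

theorem card_biUnion_cubeFinset (hP : (P : Set (Fin n → ZMod 4)).PairwiseDisjoint cube) :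
    (P.biUnion cubeFinset).card = P.card * 2 ^ n := by
  have hP' : (P : Set (Fin n → ZMod 4)).PairwiseDisjoint cubeFinset :=
    hP.mono' fun v w h => Finset.disjoint_coe.mp (by simpa using h)
  simp [Finset.card_biUnion hP', card_cubeFinset]

theorem card_mul_two_pow_le_of_pairwiseDisjoint
    (hP : (P : Set (Fin n → ZMod 4)).PairwiseDisjoint cube) :
    P.card * 2 ^ n ≤ 4 ^ n := by
  rw [← card_biUnion_cubeFinset hP]
  simpa using (P.biUnion cubeFinset).card_le_univ

theorem iUnion_cube_eq_univ_of_card_eq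
    (hP : (P : Set (Fin n → ZMod 4)).PairwiseDisjoint cube) (hcard : P.card = 2 ^ n) :
    ⋃ v ∈ P, cube v = Set.univ := by
  have : P.biUnion cubeFinset = Finset.univ := by
    apply Finset.eq_univ_of_card
    rw [card_biUnion_cubeFinset hP, hcard]
    simp [← mul_pow]
  simpa using congrArg (↑· : Finset _ → Set (Fin n → ZMod 4)) this

end Cube

theorem exists_disjoint_cube_of_two (a b : Fin 2 → ZMod 4) :
    ∃ w, Disjoint (cube a) (cube w) ∧ Disjoint (cube b) (cube w) :=
  ⟨![a 0 + 2, b 1 + 2], disjoint_cube_iff.mpr ⟨0, rfl⟩, disjoint_cube_iff.mpr ⟨1, rfl⟩⟩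

theorem exists_disjoint_cube_of_three {a b c : Fin 2 → ZMod 4}
    (hab : Disjoint (cube a) (cube b)) (hac : Disjoint (cube a) (cube c))
    (hbc : Disjoint (cube b) (cube c)) :
    ∃ w, Disjoint (cube a) (cube w) ∧ Disjoint (cube b) (cube w) ∧
      Disjoint (cube c) (cube w) := by
  simp only [disjoint_cube_iff, Fin.exists_fin_two] at *
  wlog h : b 0 = a 0 + 2 generalizing a b c
  · obtain ⟨w, hw⟩ := this (a := ![a 1, a 0]) (b := ![b 1, b 0]) (c := ![c 1, c 0])
      (by simpa [or_comm] using hab) (by simpa [or_comm] using hac)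
      (by simpa [or_comm] using hbc) (by simpa using hab.resolve_left h)
    exact ⟨![w 1, w 0], by simpa [or_comm] using hw⟩
  -- As `a 0 = b 0 + 2`, the first coordinate `a 0` serves `b` and any `c` with `c 0 = b 0`,
  -- while `a 0 + 2` serves `a` and any `c` with `c 0 = a 0`.
  by_cases hcb : c 0 = b 0
  · exact ⟨![a 0, a 1 + 2], by simp; grind⟩
  by_cases hca : c 0 = a 0
  · exact ⟨![a 0 + 2, b 1 + 2], by simp; grind⟩
  have hca' : c 1 = a 1 + 2 := hac.resolve_left (by grind)
  have hcb' : c 1 = b 1 + 2 := hbc.resolve_left (by grind)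
  exact ⟨![c 0 + 2, c 1], by simp; grind⟩

theorem exists_disjoint_cube_of_card_le_three {S : Finset (Fin 2 → ZMod 4)}
    (hS : (S : Set (Fin 2 → ZMod 4)).PairwiseDisjoint cube) (hcard : S.card ≤ 3) :
    ∃ w, ∀ v ∈ S, Disjoint (cube v) (cube w) := by
  interval_cases h : S.card
  · exact ⟨0, by simp [Finset.card_eq_zero.mp h]⟩
  · obtain ⟨a, rfl⟩ := Finset.card_eq_one.mp h
    obtain ⟨w, hw, -⟩ := exists_disjoint_cube_of_two a a
    exact ⟨w, by simpa using hw⟩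
  · obtain ⟨a, b, -, rfl⟩ := Finset.card_eq_two.mp h
    obtain ⟨w, hw⟩ := exists_disjoint_cube_of_two a b
    exact ⟨w, by simpa using hw⟩
  · obtain ⟨a, b, c, hab, hac, hbc, rfl⟩ := Finset.card_eq_three.mp h
    obtain ⟨w, hw⟩ := exists_disjoint_cube_of_three (hS (by simp) (by simp) hab)
      (hS (by simp) (by simp) hac) (hS (by simp) (by simp) hbc)
    exact ⟨w, by simpa using hw⟩

theorem dim2_nonextensible_is_tiling (P : Finset (Fin 2 → ZMod 4))
    (hP : (P : Set (Fin 2 → ZMod 4)).Pairwise fun v w => Disjoint (cube v) (cube w))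
    (hmax : ∀ w : Fin 2 → ZMod 4, ¬ ∀ v ∈ P, Disjoint (cube v) (cube w)) :
    P.card = 4 ∧ (⋃ v ∈ P, cube v) = Set.univ := by
  have hge : 4 ≤ P.card := by
    by_contra! hlt
    obtain ⟨w, hw⟩ := exists_disjoint_cube_of_card_le_three hP (by omega)
    exact hmax w hw
  have hle := card_mul_two_pow_le_of_pairwiseDisjoint hP
  have hcard : P.card = 4 := by omega
  exact ⟨hcard, iUnion_cube_eq_univ_of_card_eq hP hcard⟩
end

section
/- In the discrete torus (ℤ/4ℤ)^n, there is no non-extensible cube packing consisting of exactly 2^n - 1 cubes; equivalently, every cube packing with 2^n - 1 cubes can be extended to a tiling by adding one more cube. -/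
namespace CubePacking

open Finset Function

def par : ZMod 4 →+* ZMod 2 := ZMod.castHom (by norm_num) (ZMod 2)

/- In the lemma names below, `a = c ∨ a = c + 1` reads as `a ∈ {c, c + 1}`. -/

lemma eq_or_eq_add_one_and_par_eq_iff (a c : ZMod 4) (b : ZMod 2) :
    (a = c ∨ a = c + 1) ∧ par a = b ↔ a = if par c = b then c else c + 1 := by
  revert a c b; decide

lemma card_filter_par_eq (b : ZMod 2) : #{a : ZMod 4 | par a = b} = 2 := by
  revert b; decide

lemma add_two_mem_of_add_mem_of_not_mem {a c d : ZMod 4} (hd : par d = 1)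
    (h : a + d = c ∨ a + d = c + 1) (ha : ¬(a = c ∨ a = c + 1)) :
    a + 2 = c ∨ a + 2 = c + 1 := by
  revert a c d; decide

lemma not_add_one_mem_and_sub_one_mem {a c : ZMod 4} (h₁ : a + 1 = c ∨ a + 1 = c + 1)
    (h₂ : a - 1 = c ∨ a - 1 = c + 1) : False := by
  revert a c; decide

lemma exists_eq_or_eq_add_one_of_par_ne {a b : ZMod 4} (h : par a ≠ par b) :
    ∃ c, (a = c ∨ a = c + 1) ∧ (b = c ∨ b = c + 1) := by
  revert a b; decide

lemma add_one_eq_of_ne {a b : ZMod 2} (h : a ≠ b) : a + 1 = b := by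
  revert a b; decide

variable {n : ℕ}

def parity (x : Fin n → ZMod 4) : Fin n → ZMod 2 := fun i => par (x i)

def cubePoint (v : Fin n → ZMod 4) (s : Fin n → ZMod 2) : Fin n → ZMod 4 :=
  fun i => if par (v i) = s i then v i else v i + 1

lemma mem_cube_and_parity_eq_iff {v x : Fin n → ZMod 4} {s : Fin n → ZMod 2} :
    x ∈ cube v ∧ parity x = s ↔ x = cubePoint v s := by
  simp only [cube, Set.mem_ofPred_eq, funext_iff, parity, cubePoint, ← forall_and,
    eq_or_eq_add_one_and_par_eq_iff]

lemma injOn_parity_cube (v : Fin n → ZMod 4) : Set.InjOn parity (cube v) :=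
  fun _ hx _ hy h =>
    (mem_cube_and_parity_eq_iff.1 ⟨hx, rfl⟩).trans (mem_cube_and_parity_eq_iff.1 ⟨hy, h.symm⟩).symm

lemma card_filter_parity_eq (s : Fin n → ZMod 2) : #{x | parity x = s} = 2 ^ n := by
  have : ({x | parity x = s} : Finset (Fin n → ZMod 4)) =
      Fintype.piFinset fun i => {a | par a = s i} := by
    ext x
    simp [parity, funext_iff, Fintype.mem_piFinset]
  simp [this, Fintype.card_piFinset, card_filter_par_eq]

lemma cube_eq_pi (v : Fin n → ZMod 4) : cube v = Set.univ.pi fun i => {v i, v i + 1} := by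
  ext; simp [cube]

lemma update_mem_cube_iff {x v : Fin n → ZMod 4} {i : Fin n} {a b : ZMod 4}
    (h : update x i b ∈ cube v) : update x i a ∈ cube v ↔ a = v i ∨ a = v i + 1 := by
  rw [cube_eq_pi] at h ⊢
  rw [← update_idem (β := fun _ => ZMod 4) b a x, Set.update_mem_pi_iff_of_mem h]
  simp

section

variable {U : Set (Fin n → ZMod 4)}

lemma apply_eq_of_par_eq (hinj : Set.InjOn parity U)
    (hstep : ∀ x ∈ U, ∀ j, update x j (x j + 1) ∈ U ∨ update x j (x j - 1) ∈ U)
    {x y : Fin n → ZMod 4} (hx : x ∈ U) (hy : y ∈ U) {i : Fin n} (h : par (x i) = par (y i)) :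
    x i = y i := by
  suffices key : ∀ S : Finset (Fin n), ∀ x ∈ U, (∀ j ∉ S, par (x j) = par (y j)) →
      ∀ j ∉ S, x j = y j from
    key {i}ᶜ x hx (fun j hj => by rwa [mem_singleton.1 (notMem_compl.1 hj)]) i (by simp)
  intro S
  induction S using Finset.induction_on with
  | empty =>
    intro x hx hxy j _
    rw [hinj hx hy (funext fun k => hxy k (notMem_empty k))]
  | insert k S _ ih =>
    intro x hx hxy j hj
    rw [mem_insert, not_or] at hj
    obtain ⟨x', hx', hx'j, hx'y⟩ : ∃ x' ∈ U, x' j = x j ∧ ∀ l ∉ S, par (x' l) = par (y l) := by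
      by_cases hxk : par (x k) = par (y k)
      · refine ⟨x, hx, rfl, fun l hl => ?_⟩
        rcases eq_or_ne l k with rfl | hlk
        · exact hxk
        · exact hxy l (by simp [hlk, hl])
      obtain ⟨d, hd, hxd⟩ : ∃ d, par d = 1 ∧ update x k (x k + d) ∈ U := by
        rcases hstep x hx k with h | h
        · exact ⟨1, map_one par, h⟩
        · exact ⟨-1, by decide, by rwa [← sub_eq_add_neg]⟩
      refine ⟨_, hxd, update_of_ne hj.1 _ _, fun l hl => ?_⟩
      rcases eq_or_ne l k with rfl | hlk
      · rw [update_self, map_add, hd, add_one_eq_of_ne hxk]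
      · rw [update_of_ne hlk]
        exact hxy l (by simp [hlk, hl])
    rw [← hx'j]
    exact ih x' hx' hx'y j hj.2

lemma exists_cube_eq_of_bijOn_parity (hbij : Set.BijOn parity U Set.univ)
    (hstep : ∀ x ∈ U, ∀ j, update x j (x j + 1) ∈ U ∨ update x j (x j - 1) ∈ U) :
    ∃ w, cube w = U := by
  obtain ⟨p, hp, hp0⟩ := hbij.surjOn (Set.mem_univ 0)
  obtain ⟨q, hq, hq1⟩ := hbij.surjOn (Set.mem_univ 1)
  replace hp0 : ∀ i, par (p i) = 0 := congr_fun hp0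
  replace hq1 : ∀ i, par (q i) = 1 := congr_fun hq1
  have hpq : ∀ i, par (p i) ≠ par (q i) := fun i => by rw [hp0, hq1]; decide
  choose w hw using fun i => exists_eq_or_eq_add_one_of_par_ne (hpq i)
  have hU : U ⊆ cube w := fun x hx i => by
    have hxi : par (x i) = par (p i) ∨ par (x i) = par (q i) := by
      rw [hp0, hq1]
      generalize par (x i) = b
      revert b; decide
    rcases hxi with h | h
    · rw [apply_eq_of_par_eq hbij.injOn hstep hx hp h]; exact (hw i).1
    · rw [apply_eq_of_par_eq hbij.injOn hstep hx hq h]; exact (hw i).2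
  refine ⟨w, subset_antisymm (fun x hx => ?_) hU⟩
  obtain ⟨u, hu, hux⟩ := hbij.surjOn (Set.mem_univ (parity x))
  rwa [← injOn_parity_cube w (hU hu) hx hux]

end

section

variable {P : Finset (Fin n → ZMod 4)}

def uncovered (P : Finset (Fin n → ZMod 4)) : Set (Fin n → ZMod 4) := (⋃ v ∈ P, cube v)ᶜ

lemma mem_uncovered {x : Fin n → ZMod 4} : x ∈ uncovered P ↔ ∀ v ∈ P, x ∉ cube v := by
  simp [uncovered]

lemma existsUnique_mem_uncovered_parity_eq
    (hP : (P : Set (Fin n → ZMod 4)).PairwiseDisjoint cube) (hcard : #P + 1 = 2 ^ n)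
    (s : Fin n → ZMod 2) : ∃! x, x ∈ uncovered P ∧ parity x = s := by
  set F : Finset (Fin n → ZMod 4) := {x | parity x = s}
  set C := P.image (cubePoint · s)
  have hC : ∀ x, x ∈ C ↔ ∃ v ∈ P, x ∈ cube v ∧ parity x = s := fun x => by
    simp only [C, mem_image, mem_cube_and_parity_eq_iff, eq_comm (b := x)]
  have hCF : C ⊆ F := fun x hx => by
    obtain ⟨-, -, -, hx⟩ := (hC x).1 hx
    simpa [F] using hx
  have hCcard : #C = #P := card_image_of_injOn fun v hv w hw h =>
    hP.elim_set hv hw _ (mem_cube_and_parity_eq_iff.2 rfl).1 (mem_cube_and_parity_eq_iff.2 h).1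
  have hD : ∀ x, x ∈ F \ C ↔ x ∈ uncovered P ∧ parity x = s := fun x => by
    simp only [F, mem_sdiff, mem_filter_univ, hC, mem_uncovered]
    exact ⟨fun ⟨hs, hx⟩ => ⟨fun v hv hxv => hx ⟨v, hv, hxv, hs⟩, hs⟩,
      fun ⟨hx, hs⟩ => ⟨hs, fun ⟨v, hv, hxv, _⟩ => hx v hv hxv⟩⟩
  obtain ⟨u, hu⟩ := card_eq_one.1 <| show #(F \ C) = 1 by
    rw [card_sdiff_of_subset hCF, card_filter_parity_eq, hCcard]
    omega
  exact ⟨u, (hD u).1 (hu ▸ mem_singleton_self u), fun x hx => mem_singleton.1 (hu ▸ (hD x).2 hx)⟩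

lemma bijOn_parity_uncovered (hP : (P : Set (Fin n → ZMod 4)).PairwiseDisjoint cube)
    (hcard : #P + 1 = 2 ^ n) : Set.BijOn parity (uncovered P) Set.univ := by
  have h := existsUnique_mem_uncovered_parity_eq hP hcard
  exact ⟨Set.mapsTo_univ _ _, fun x hx y hy hxy => (h (parity x)).unique ⟨hx, rfl⟩ ⟨hy, hxy.symm⟩,
    fun s _ => (h s).exists⟩

lemma update_mem_uncovered_or (hP : (P : Set (Fin n → ZMod 4)).PairwiseDisjoint cube)
    {x : Fin n → ZMod 4} (hx : x ∈ uncovered P) (i : Fin n) :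
    update x i (x i + 1) ∈ uncovered P ∨ update x i (x i - 1) ∈ uncovered P := by
  rw [mem_uncovered] at hx
  have hmove : ∀ d v, par d = 1 → v ∈ P → update x i (x i + d) ∈ cube v →
      update x i (x i + 2) ∈ cube v := fun d v hd hv h => by
    have hxi : ¬(x i = v i ∨ x i = v i + 1) := by
      rw [← update_mem_cube_iff h, update_eq_self]
      exact hx v hv
    exact (update_mem_cube_iff h).2
      (add_two_mem_of_add_mem_of_not_mem hd ((update_mem_cube_iff h).1 h) hxi)
  by_contra! h
  simp only [mem_uncovered, not_forall, not_not] at h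
  obtain ⟨⟨v₁, hv₁, h₁⟩, ⟨v₂, hv₂, h₂⟩⟩ := h
  obtain rfl : v₁ = v₂ := hP.elim_set hv₁ hv₂ _ (hmove 1 v₁ (map_one par) hv₁ h₁)
    (hmove (-1) v₂ (by decide) hv₂ (by rwa [← sub_eq_add_neg]))
  exact not_add_one_mem_and_sub_one_mem (by simpa using h₁ i) (by simpa using h₂ i)

end

end CubePacking

open CubePacking

theorem packing_card_pred_extends_to_tiling {n : ℕ} (P : Finset (Fin n → ZMod 4))
    (hP : (P : Set (Fin n → ZMod 4)).Pairwise fun v w => Disjoint (cube v) (cube w))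
    (hcard : P.card + 1 = 2 ^ n) :
    ∃ w : Fin n → ZMod 4, (∀ v ∈ P, Disjoint (cube v) (cube w)) ∧
      (⋃ v ∈ insert w P, cube v) = Set.univ := by
  obtain ⟨w, hw⟩ := exists_cube_eq_of_bijOn_parity (bijOn_parity_uncovered hP hcard)
    fun _ hx => update_mem_uncovered_or hP hx
  refine ⟨w, fun v hv => ?_, ?_⟩
  · rw [hw, uncovered]
    exact disjoint_compl_right.mono_left (Set.subset_biUnion_of_mem (u := cube) hv)
  · rw [Finset.set_biUnion_insert, hw, uncovered, Set.compl_union_self]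
end

section
/- h(3) = 4: there exist 4 cubes in the discrete torus (ℤ/4ℤ)^3 such that every cube of the torus meets one of them, and no family of 3 cubes has this property. -/
/-- A blocking set: a family of cubes meeting every cube of the torus. -/
def IsBlocking {n : ℕ} (B : Finset (Fin n → ZMod 4)) : Prop :=
  ∀ w : Fin n → ZMod 4, ∃ v ∈ B, ¬ Disjoint (cube v) (cube w)

lemma ZMod.four_exists_mem_pair_inter_iff (a b : ZMod 4) :
    (∃ x : ZMod 4, (x = a ∨ x = a + 1) ∧ (x = b ∨ x = b + 1)) ↔ a - b ≠ 2 := by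
  revert a b
  decide

lemma not_disjoint_cube_iff {n : ℕ} (v w : Fin n → ZMod 4) :
    ¬ Disjoint (cube v) (cube w) ↔ ∀ i, v i - w i ≠ 2 := by
  rw [Set.not_disjoint_iff]
  constructor
  · rintro ⟨x, hv, hw⟩ i
    exact (ZMod.four_exists_mem_pair_inter_iff (v i) (w i)).mp ⟨x i, hv i, hw i⟩
  · intro h
    choose x hx using fun i => (ZMod.four_exists_mem_pair_inter_iff (v i) (w i)).mpr (h i)
    exact ⟨x, fun i => (hx i).1, fun i => (hx i).2⟩

def diagonalCubes (n : ℕ) : Finset (Fin n → ZMod 4) :=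
  Finset.univ.image fun c : ZMod 4 => Function.const (Fin n) c

lemma card_diagonalCubes {n : ℕ} (hn : 0 < n) : (diagonalCubes n).card = 4 := by
  have : Nonempty (Fin n) := ⟨⟨0, hn⟩⟩
  rw [diagonalCubes, Finset.card_image_of_injective _ (Function.const_injective), Finset.card_univ,
    ZMod.card]

lemma isBlocking_diagonalCubes {n : ℕ} (hn : n ≤ 3) : IsBlocking (diagonalCubes n) := by
  intro w
  have hcard : (Finset.univ.image fun i => w i + 2).card < (Finset.univ : Finset (ZMod 4)).card :=
    calc _ ≤ (Finset.univ : Finset (Fin n)).card := Finset.card_image_le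
      _ < _ := by simp only [Finset.card_univ, Fintype.card_fin, ZMod.card]; omega
  obtain ⟨c, -, hc⟩ := Finset.exists_mem_notMem_of_card_lt_card hcard
  refine ⟨Function.const _ c, Finset.mem_image_of_mem _ (Finset.mem_univ c), ?_⟩
  rw [not_disjoint_cube_iff]
  intro i hi
  exact hc (Finset.mem_image.mpr ⟨i, Finset.mem_univ i, by rw [← hi, add_sub_cancel]; rfl⟩)

theorem IsBlocking.lt_card {n : ℕ} {B : Finset (Fin n → ZMod 4)} (hB : IsBlocking B) :
    n < B.card := by
  by_contra! hle
  let w : Fin n → ZMod 4 := fun i => B.toList.getD i 0 i + 2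
  obtain ⟨v, hv, hmeet⟩ := hB w
  obtain ⟨k, hk, rfl⟩ := List.mem_iff_getElem.mp (Finset.mem_toList.mpr hv)
  have hkn : k < n := (Finset.length_toList B ▸ hk).trans_le hle
  refine (not_disjoint_cube_iff _ w).mp hmeet ⟨k, hkn⟩ ?_
  simp only [w, List.getD_eq_getElem _ _ hk, sub_add_cancel_left]
  decide

theorem h_three_eq_four :
    (∃ B : Finset (Fin 3 → ZMod 4), B.card = 4 ∧ IsBlocking B) ∧
    (∀ B : Finset (Fin 3 → ZMod 4), IsBlocking B → 4 ≤ B.card) :=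
  ⟨⟨diagonalCubes 3, card_diagonalCubes (by norm_num), isBlocking_diagonalCubes le_rfl⟩,
    fun _ hB => hB.lt_card⟩
end

section
/- Keller's conjecture holds for tilings of class T_2 in dimension 2: in every cube tiling of the discrete torus (ℤ/4ℤ)^2 by 4 pairwise disjoint cubes, there exist two cubes at positions v, w such that v - w = 2e_i for some standard basis vector e_i (i.e., the two cubes share a complete facet). -/
/-!
Two cubes are disjoint exactly when their positions differ by `2` in some coordinate. Take any
cube `a` of the tiling and let `b` be the cube covering `a + 2e₀`; comparing with `a`, only the
first coordinate can separate them, so `b₀ = a₀ + 2` and `b₁ ∈ {a₁, a₁ - 1}`. If `b₁ = a₁`, then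
`a` and `b` share a facet. Otherwise the cube `c` covering `a + 2e₀ + e₁` is forced, first by `a`
and then by `b`, to be `b + 2e₁`.
-/

section Cube

variable {n : ℕ} {v w x y : Fin n → ZMod 4}

theorem self_mem_cube (v : Fin n → ZMod 4) : v ∈ cube v := fun _ => Or.inl rfl

theorem exists_sub_eq_two_of_disjoint_cube (h : Disjoint (cube v) (cube w)) :
    ∃ i, v i - w i = 2 := by
  by_contra! hne
  have mem_of_sub_ne_two : ∀ a b : ZMod 4, a - b ≠ 2 → b ≠ a + 1 → a = b ∨ a = b + 1 := by
    decide
  let x : Fin n → ZMod 4 := fun i => if w i = v i + 1 then w i else v i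
  have hxv : x ∈ cube v := fun i => by
    dsimp only [x]; split_ifs with hi
    exacts [Or.inr hi, Or.inl rfl]
  have hxw : x ∈ cube w := fun i => by
    dsimp only [x]; split_ifs with hi
    exacts [Or.inl rfl, mem_of_sub_ne_two _ _ (hne i) hi]
  exact Set.disjoint_left.mp h hxv hxw

theorem sub_ne_two_of_mem_cube (hx : x ∈ cube v) (hy : y ∈ cube w) {i : Fin n}
    (hxy : x i = y i) : v i - w i ≠ 2 := by
  have key : ∀ a b c : ZMod 4, (c = a ∨ c = a + 1) → (c = b ∨ c = b + 1) → a - b ≠ 2 := by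
    decide
  exact key _ _ _ (hx i) (hxy ▸ hy i)

theorem ne_of_mem_cube_of_sub_eq_two (hx : x ∈ cube v) (hy : y ∈ cube w) {i : Fin n}
    (hxy : x i - y i = 2) : v ≠ w := by
  rintro rfl
  have key : ∀ a c d : ZMod 4, (c = a ∨ c = a + 1) → (d = a ∨ d = a + 1) → c - d ≠ 2 := by
    decide
  exact key _ _ _ (hx i) (hy i) hxy

theorem sub_eq_two_of_mem_cube {P : Set (Fin n → ZMod 4)}
    (hP : P.Pairwise fun v w => Disjoint (cube v) (cube w)) (hv : v ∈ P) (hw : w ∈ P)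
    (hx : x ∈ cube v) (hy : y ∈ cube w) {i : Fin n} (hi : x i - y i = 2)
    (hne : ∀ j, j ≠ i → x j = y j) : v i - w i = 2 := by
  obtain ⟨k, hk⟩ :=
    exists_sub_eq_two_of_disjoint_cube (hP hv hw (ne_of_mem_cube_of_sub_eq_two hx hy hi))
  obtain rfl | hki := eq_or_ne k i
  · exact hk
  · exact absurd hk (sub_ne_two_of_mem_cube hx hy (hne k hki))

end Cube

theorem keller_dim2_general (P : Finset (Fin 2 → ZMod 4))
    (hP : (P : Set (Fin 2 → ZMod 4)).Pairwise fun v w => Disjoint (cube v) (cube w))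
    (hcover : (⋃ v ∈ P, cube v) = Set.univ) :
    ∃ v ∈ P, ∃ w ∈ P, ∃ i, v i - w i = 2 ∧ ∀ j, j ≠ i → v j = w j := by
  have hcov : ∀ x, ∃ v ∈ P, x ∈ cube v := fun x => by
    simpa using Set.eq_univ_iff_forall.mp hcover x
  obtain ⟨a, ha, -⟩ := hcov 0
  obtain ⟨b, hb, hpb⟩ := hcov ![a 0 + 2, a 1]
  have hba : b 0 - a 0 = 2 := sub_eq_two_of_mem_cube hP hb ha hpb (self_mem_cube a) (by simp)
    (Fin.forall_fin_two.mpr ⟨fun h => absurd rfl h, fun _ => rfl⟩)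
  obtain hb1 | hb1 : a 1 = b 1 ∨ a 1 = b 1 + 1 := by simpa using hpb 1
  · exact ⟨b, hb, a, ha, 0, hba, Fin.forall_fin_two.mpr ⟨fun h => absurd rfl h, fun _ => hb1.symm⟩⟩
  obtain ⟨c, hc, hqc⟩ := hcov ![a 0 + 2, a 1 + 1]
  have hqa : ![a 0, a 1 + 1] ∈ cube a := Fin.forall_fin_two.mpr ⟨Or.inl rfl, Or.inr rfl⟩
  have hca : c 0 - a 0 = 2 := sub_eq_two_of_mem_cube hP hc ha hqc hqa (by simp)
    (Fin.forall_fin_two.mpr ⟨fun h => absurd rfl h, fun _ => rfl⟩)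
  have hcb : c 1 - b 1 = 2 := by
    refine sub_eq_two_of_mem_cube hP hc hb hqc (self_mem_cube b) ?_
      (Fin.forall_fin_two.mpr ⟨fun _ => ?_, fun h => absurd rfl h⟩)
    · simp only [Matrix.cons_val_one, Matrix.cons_val_zero]
      linear_combination hb1
    · simp only [Matrix.cons_val_zero]
      linear_combination -hba
  refine ⟨c, hc, b, hb, 1, hcb, Fin.forall_fin_two.mpr ⟨fun _ => ?_, fun h => absurd rfl h⟩⟩
  linear_combination hca - hba

theorem keller_dim2 (P : Finset (Fin 2 → ZMod 4))
    (hcard : P.card = 4)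
    (hP : (P : Set (Fin 2 → ZMod 4)).Pairwise fun v w => Disjoint (cube v) (cube w))
    (hcover : (⋃ v ∈ P, cube v) = Set.univ) :
    ∃ v ∈ P, ∃ w ∈ P, ∃ i, v i - w i = 2 ∧ ∀ j, j ≠ i → v j = w j :=
  keller_dim2_general P hP hcover
end

section
/- Consider the continuous torus ℝ^n/2ℤ^n and unit cubes t + [0,1)^n for t ∈ ℝ^n/2ℤ^n. Two such cubes t + [0,1)^n and t' + [0,1)^n are disjoint if and only if there exists a coordinate i such that t_i - t'_i ≡ 1 (mod 2), i.e., t_i - t'_i lifts to an odd integer. -/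
/-!
A cube is the product of its coordinate arcs `t i + [0,1)`, so two cubes are disjoint iff some
pair of coordinate arcs is. The arcs `a + [0,1)` and `b + [0,1)` meet iff `a - b` has a
representative in `(-1,1)`; as every class of `ℝ/2ℤ` has a unique representative in `(-1,1]`,
this fails exactly when `a - b = 1`, i.e. when `a - b` is the class of an odd integer.
-/

/-- The unit cube `t + [0,1)^n` in the continuous torus `(ℝ/2ℤ)^n`. -/
def cubeC {n : ℕ} (t : Fin n → AddCircle (2 : ℝ)) : Set (Fin n → AddCircle (2 : ℝ)) :=
  {x | ∀ i, ∃ r : ℝ, 0 ≤ r ∧ r < 1 ∧ x i = t i + (r : AddCircle (2 : ℝ))}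

open Set

namespace AddCircle

variable {p : ℝ}

def arc (a : AddCircle p) (ℓ : ℝ) : Set (AddCircle p) :=
  {x | ∃ r ∈ Ico 0 ℓ, x = a + r}

theorem arc_inter_arc_nonempty_iff {a b : AddCircle p} {ℓ : ℝ} :
    (arc a ℓ ∩ arc b ℓ).Nonempty ↔ ∃ c ∈ Ioo (-ℓ) ℓ, a - b = c := by
  constructor
  · rintro ⟨x, ⟨r, ⟨hr₀, hr₁⟩, rfl⟩, ⟨s, ⟨hs₀, hs₁⟩, hs⟩⟩
    refine ⟨s - r, ⟨by linarith, by linarith⟩, ?_⟩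
    rw [coe_sub, eq_sub_iff_add_eq, ← add_sub_right_comm, sub_eq_iff_eq_add', hs]
  · rintro ⟨c, ⟨hc₀, hc₁⟩, hc⟩
    have hℓ : 0 < ℓ := by linarith
    refine ⟨a + ↑(max (-c) 0), ⟨_, ⟨le_max_right _ _, max_lt (by linarith) hℓ⟩, rfl⟩,
      ⟨max c 0, ⟨le_max_right _ _, max_lt hc₁ hℓ⟩, ?_⟩⟩
    have hsplit : (c : AddCircle p) = ↑(max c 0) - ↑(max (-c) 0) := by
      rw [← coe_sub, max_zero_sub_max_neg_zero_eq_self]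
    rw [eq_add_of_sub_eq hc, hsplit]
    abel

theorem exists_mem_Ioo_coe_eq_iff {ℓ : ℝ} (hℓ : 0 < ℓ) (hp : p = 2 * ℓ) (d : AddCircle p) :
    (∃ c ∈ Ioo (-ℓ) ℓ, d = c) ↔ d ≠ ℓ := by
  have : Fact (0 < p) := ⟨by linarith⟩
  have hIoc : Ioc (-ℓ) (-ℓ + p) = Ioc (-ℓ) ℓ := by rw [hp]; ring_nf
  constructor
  · rintro ⟨c, ⟨hc₀, hc₁⟩, rfl⟩ h
    rw [coe_eq_coe_iff_of_mem_Ioc (a := -ℓ) (by rw [hIoc]; exact ⟨hc₀, hc₁.le⟩)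
      (by rw [hIoc]; exact ⟨by linarith, le_rfl⟩)] at h
    exact hc₁.ne h
  · intro hd
    have hdc : d = (equivIoc p (-ℓ) d : ℝ) := coe_equivIoc.symm
    have hc := (equivIoc p (-ℓ) d).2
    generalize (equivIoc p (-ℓ) d : ℝ) = c at hdc hc
    rw [hIoc] at hc
    refine ⟨c, ⟨hc.1, hc.2.lt_of_ne ?_⟩, hdc⟩
    rintro rfl
    exact hd hdc

theorem intCast_eq_one_iff_odd (k : ℤ) :
    ((k : ℝ) : AddCircle (2 : ℝ)) = ((1 : ℝ) : AddCircle (2 : ℝ)) ↔ Odd k := by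
  rw [← sub_eq_zero, ← coe_sub, coe_eq_zero_iff]
  constructor
  · rintro ⟨m, hm⟩
    rw [zsmul_eq_mul] at hm
    exact ⟨m, by exact_mod_cast (by linarith : (k : ℝ) = 2 * m + 1)⟩
  · rintro ⟨m, rfl⟩
    exact ⟨m, by push_cast; rw [zsmul_eq_mul]; ring⟩

theorem disjoint_arc_iff {ℓ : ℝ} (hℓ : 0 < ℓ) (hp : p = 2 * ℓ) (a b : AddCircle p) :
    Disjoint (arc a ℓ) (arc b ℓ) ↔ a - b = ℓ := by
  rw [← not_iff_not, not_disjoint_iff_nonempty_inter, arc_inter_arc_nonempty_iff,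
    exists_mem_Ioo_coe_eq_iff hℓ hp]

theorem exists_odd_intCast_eq_iff (d : AddCircle (2 : ℝ)) :
    (∃ k : ℤ, Odd k ∧ d = ((k : ℝ) : AddCircle (2 : ℝ))) ↔ d = ((1 : ℝ) : AddCircle (2 : ℝ)) := by
  constructor
  · rintro ⟨k, hk, rfl⟩
    exact (intCast_eq_one_iff_odd k).2 hk
  · rintro rfl
    exact ⟨1, odd_one, by rw [Int.cast_one]⟩

end AddCircle

open AddCircle

theorem cubeC_eq_pi {n : ℕ} (t : Fin n → AddCircle (2 : ℝ)) :
    cubeC t = univ.pi fun i => arc (t i) 1 := by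
  ext x
  simp [cubeC, arc, and_assoc]

theorem cubesC_disjoint_iff {n : ℕ} (t t' : Fin n → AddCircle (2 : ℝ)) :
    Disjoint (cubeC t) (cubeC t') ↔
      ∃ i, ∃ k : ℤ, Odd k ∧ t i - t' i = ((k : ℝ) : AddCircle (2 : ℝ)) := by
  rw [cubeC_eq_pi, cubeC_eq_pi, disjoint_univ_pi]
  refine exists_congr fun i => ?_
  rw [disjoint_arc_iff one_pos (by norm_num), exists_odd_intCast_eq_iff]
end

section
/- For every odd n ≥ 3, there exists a non-extensible cube packing of the continuous torus ℝ^n/2ℤ^n consisting of exactly n + 1 pairwise disjoint unit cubes: i.e., n + 1 pairwise disjoint cubes such that every unit cube of the torus overlaps one of them. Such packings arise from one-factorizations of the complete graph K_{n+1}: given a one-factorization F_1, ..., F_n of K_{n+1} on vertex set {1, ..., n+1} and generic reals 0 < α_1, ..., α_n < 1, the cubes with centers t^j (j = 1, ..., n+1) defined by t^j_i = α_i if j is in a fixed side of the perfect matching F_i and t^j_i = α_i + 1 otherwise, are pairwise disjoint, and for suitable choices the packing is non-extensible. -/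
open Function Set

namespace CubePacking

local notation "𝕋" => AddCircle (2 : ℝ)

instance : Fact ((0 : ℝ) < 2) := ⟨two_pos⟩

def unitArc (a : 𝕋) : Set 𝕋 :=
  {x | ∃ r : ℝ, 0 ≤ r ∧ r < 1 ∧ x = a + (r : 𝕋)}

lemma cubeC_eq_pi {n : ℕ} (t : Fin n → 𝕋) : cubeC t = univ.pi fun i => unitArc (t i) := by
  ext x
  simp [cubeC, unitArc]

lemma self_mem_cubeC {n : ℕ} (t : Fin n → 𝕋) : t ∈ cubeC t :=
  fun _ => ⟨0, le_rfl, one_pos, by simp⟩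

lemma disjoint_unitArc_iff {a b : 𝕋} :
    Disjoint (unitArc a) (unitArc b) ↔ a = b + ((1 : ℝ) : 𝕋) := by
  constructor
  · intro h
    set d : ℝ := (AddCircle.equivIco 2 0 (a - b) : ℝ)
    have hd : d ∈ Ico (0 : ℝ) 2 := by simpa using (AddCircle.equivIco 2 0 (a - b)).2
    have hab : a = b + (d : 𝕋) := by rw [AddCircle.coe_equivIco]; abel
    by_contra hne
    rcases lt_or_gt_of_ne (show d ≠ 1 by rintro hd1; exact hne (hd1 ▸ hab)) with hd1 | hd1
    · exact h.ne_of_mem ⟨0, le_rfl, one_pos, by simp⟩ ⟨d, hd.1, hd1, hab⟩ rfl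
    · have hb : b ∈ unitArc a := by
        refine ⟨2 - d, by linarith [hd.2], by linarith, ?_⟩
        rw [hab, add_assoc, ← AddCircle.coe_add, add_sub_cancel, AddCircle.coe_period, add_zero]
      exact h.ne_of_mem hb ⟨0, le_rfl, one_pos, by simp⟩ rfl
  · rintro rfl
    rw [Set.disjoint_left]
    rintro x ⟨r, hr0, hr1, rfl⟩ ⟨r', hr0', hr1', h⟩
    rw [add_assoc, add_right_inj, ← AddCircle.coe_add,
      AddCircle.coe_eq_coe_iff_of_mem_Ico (a := 0) ⟨by linarith, by linarith⟩
        ⟨hr0', by linarith⟩] at h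
    linarith

lemma disjoint_cubeC_iff {n : ℕ} {u v : Fin n → 𝕋} :
    Disjoint (cubeC u) (cubeC v) ↔ ∃ i, u i = v i + ((1 : ℝ) : 𝕋) := by
  simp only [cubeC_eq_pi, disjoint_univ_pi, disjoint_unitArc_iff]

lemma exists_nat_labels_of_involutive {V : Type*} [Finite V] {M : V → V}
    (hM : Involutive M) (hfix : ∀ v, M v ≠ v) :
    ∃ (m : ℕ) (N : V → ℕ), Injective N ∧ (∀ v, N v < 2 * m) ∧
      ∀ v, N v = N (M v) + m ∨ N (M v) = N v + m := by
  obtain ⟨m, ⟨e⟩⟩ := Finite.exists_equiv_fin V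
  -- `{v, M v}` is labelled by its `e`-smaller end, shifted by `m` at the other end
  let N : V → ℕ := fun v => min (e v : ℕ) (e (M v)) + if (e v : ℕ) < e (M v) then 0 else m
  have hne : ∀ v, (e v : ℕ) ≠ e (M v) := fun v h => hfix v (e.injective (Fin.ext h)).symm
  refine ⟨m, N, fun v w h => ?_, fun v => ?_, fun v => ?_⟩
  · have := (e v).isLt; have := (e w).isLt; have := hne v; have := hne w
    have : (e v : ℕ) = e w ∨ (e (M v) : ℕ) = e (M w) := by
      simp only [N] at h; split_ifs at h <;> omega
    rcases this with h' | h'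
    · exact e.injective (Fin.ext h')
    · exact hM.injective (e.injective (Fin.ext h'))
  · have := (e v).isLt; have := (e (M v)).isLt
    simp only [N]; split_ifs <;> omega
  · have := hne v
    simp only [N, hM v]; split_ifs <;> omega

lemma exists_injective_eq_add_one_of_involutive {V : Type*} [Finite V] {M : V → V}
    (hM : Involutive M) (hfix : ∀ v, M v ≠ v) :
    ∃ c : V → 𝕋, Injective c ∧ ∀ v, c v = c (M v) + ((1 : ℝ) : 𝕋) := by
  obtain ⟨m, N, hN_inj, hN_lt, hN_pair⟩ := exists_nat_labels_of_involutive hM hfix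
  have hm_pos : ∀ v : V, (0 : ℝ) < m := fun v => by
    have := hN_lt v; exact_mod_cast (show 0 < m by omega)
  refine ⟨fun v => ((N v / m : ℝ) : 𝕋), fun v w h => hN_inj ?_, fun v => ?_⟩
  · have hm := hm_pos v
    have hmem : ∀ u, (N u / m : ℝ) ∈ Ico (0 : ℝ) (0 + 2) := fun u => by
      have : (N u : ℝ) < 2 * m := by exact_mod_cast hN_lt u
      constructor
      · positivity
      · rw [zero_add, div_lt_iff₀ hm]; linarith
    rw [AddCircle.coe_eq_coe_iff_of_mem_Ico (hmem v) (hmem w), div_left_inj' hm.ne'] at h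
    exact_mod_cast h
  · have hm := (hm_pos v).ne'
    simp only [← AddCircle.coe_add]
    rcases hN_pair v with h | h
    · rw [h]; push_cast; rw [add_div, div_self hm]
    · rw [h]; push_cast
      rw [add_div, div_self hm, add_assoc, one_add_one_eq_two, AddCircle.coe_add_period]

structure IsMatchingCover {ι V : Type*} (M : ι → V → V) : Prop where
  involutive : ∀ i, Involutive (M i)
  ne_self : ∀ i v, M i v ≠ v
  exists_eq : ∀ v w, v ≠ w → ∃ i, M i v = w

lemma IsMatchingCover.comp {ι ι' V : Type*} {M : ι → V → V} (hM : IsMatchingCover M)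
    {σ : ι' → ι} (hσ : Surjective σ) : IsMatchingCover (M ∘ σ) where
  involutive i := hM.involutive (σ i)
  ne_self i := hM.ne_self (σ i)
  exists_eq v w h := by
    obtain ⟨i, hi⟩ := hM.exists_eq v w h
    obtain ⟨i', rfl⟩ := hσ i
    exact ⟨i', hi⟩

lemma IsMatchingCover.exists_packing {n : ℕ} {V : Type*} [Finite V] {M : Fin n → V → V}
    (hM : IsMatchingCover M) :
    ∃ t : V → Fin n → 𝕋, (∀ i, Injective fun v => t v i) ∧
      ∀ v w, v ≠ w → Disjoint (cubeC (t v)) (cubeC (t w)) := by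
  choose c hc_inj hc using fun i =>
    exists_injective_eq_add_one_of_involutive (hM.involutive i) (hM.ne_self i)
  refine ⟨fun v i => c i v, hc_inj, fun v w hvw => disjoint_cubeC_iff.mpr ?_⟩
  obtain ⟨i, rfl⟩ := hM.exists_eq v w hvw
  exact ⟨i, hc i v⟩

lemma exists_not_disjoint_cubeC {n : ℕ} {V : Type*} [Fintype V] (hcard : n < Fintype.card V)
    {t : V → Fin n → 𝕋} (ht : ∀ i, Injective fun v => t v i) (u : Fin n → 𝕋) :
    ∃ v, ¬ Disjoint (cubeC u) (cubeC (t v)) := by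
  by_contra! h
  choose g hg using fun v => disjoint_cubeC_iff.mp (h v)
  obtain ⟨v, w, hvw, hgvw⟩ := Fintype.exists_ne_map_eq_of_card_lt g (by simpa using hcard)
  refine hvw (ht (g v) (add_right_cancel ((hg v).symm.trans ?_)))
  rw [hgvw, hg w]

section Reflection

variable {R : Type*} [CommRing R] [DecidableEq R]

/-- The matching of `R ∪ {∞}` (`∞ = none`) pairing `j` with `2 i - j`, and `i` with `∞`. -/
def reflectMatching (i : R) : Option R → Option R
  | none => some i
  | some j => if j = i then none else some (2 * i - j)

lemma isMatchingCover_reflectMatching (h2 : IsUnit (2 : R)) :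
    IsMatchingCover (reflectMatching (R := R)) where
  involutive i v := by
    rcases v with _ | j
    · simp [reflectMatching]
    · by_cases hj : j = i
      · simp [reflectMatching, hj]
      · have : 2 * i - j ≠ i := fun h => hj (by linear_combination -h)
        simp [reflectMatching, hj, this]
  ne_self i v := by
    rcases v with _ | j
    · simp [reflectMatching]
    · by_cases hj : j = i
      · simp [reflectMatching, hj]
      · simp only [reflectMatching, hj, if_false, ne_eq, Option.some.injEq]
        exact fun h => hj (h2.mul_left_cancel (by linear_combination -h))
  exists_eq v w hvw := by
    rcases v with _ | j <;> rcases w with _ | k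
    · exact absurd rfl hvw
    · exact ⟨k, rfl⟩
    · exact ⟨j, by simp [reflectMatching]⟩
    · -- the midpoint `(j + k) / 2`
      refine ⟨↑h2.unit⁻¹ * (j + k), ?_⟩
      have hmid : 2 * (↑h2.unit⁻¹ * (j + k)) = j + k := by
        rw [← mul_assoc, h2.mul_val_inv, one_mul]
      have hj : j ≠ ↑h2.unit⁻¹ * (j + k) := fun h => hvw (by
        rw [← h] at hmid; congr 1; linear_combination hmid)
      simp only [reflectMatching, hj, if_false, hmid]
      congr 1; ring

end Reflection

lemma isUnit_two_zmod {n : ℕ} (hodd : Odd n) : IsUnit (2 : ZMod n) := by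
  simpa using (ZMod.isUnit_iff_coprime 2 n).mpr (Nat.coprime_two_left.mpr hodd)

lemma coe_ite_not (b : Bool) (α : ℝ) :
    ((if !b then α else α + 1 : ℝ) : 𝕋) =
      ((if b then α else α + 1 : ℝ) : 𝕋) + ((1 : ℝ) : 𝕋) := by
  cases b
  · rw [Bool.not_false, if_pos rfl, if_neg Bool.false_ne_true, ← AddCircle.coe_add, add_assoc,
      one_add_one_eq_two, AddCircle.coe_add_period]
  · rw [Bool.not_true, if_neg Bool.false_ne_true, if_pos rfl, AddCircle.coe_add]

end CubePacking

theorem odd_dim_nonextensible_packing_from_one_factorization_general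
    {n : ℕ} (hodd : Odd n) :
    -- the cubes coming from any one-factorization of `K_{n+1}` are pairwise disjoint
    (∀ (F : Fin n → Fin (n + 1) → Fin (n + 1)) (s : Fin n → Fin (n + 1) → Bool)
        (α : Fin n → ℝ),
      (∀ i j, F i j ≠ j) →                                  -- no fixed points
      (∀ i, Function.Involutive (F i)) →                    -- each `F i` is a matching
      (∀ j k, j ≠ k → ∃! i, F i j = k) →                    -- the matchings partition the edges
      (∀ i j, s i j = ! s i (F i j)) →                      -- `s i` picks a side of `F i`
      (∀ i, 0 < α i ∧ α i < 1) →
      ∀ j k : Fin (n + 1), j ≠ k →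
        Disjoint
          (cubeC (fun i => ((if s i j then α i else α i + 1 : ℝ) : AddCircle (2 : ℝ))))
          (cubeC (fun i => ((if s i k then α i else α i + 1 : ℝ) : AddCircle (2 : ℝ))))) ∧
    -- and for suitable choices one obtains a non-extensible packing with `n + 1` cubes
    (∃ t : Fin (n + 1) → Fin n → AddCircle (2 : ℝ),
      Function.Injective t ∧
      (∀ j k : Fin (n + 1), j ≠ k → Disjoint (cubeC (t j)) (cubeC (t k))) ∧
      (∀ u : Fin n → AddCircle (2 : ℝ), ∃ j, ¬ Disjoint (cubeC u) (cubeC (t j)))) := by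
  refine ⟨fun F s α _ _ hF hs _ j k hjk => ?_, ?_⟩
  · obtain ⟨i, hi, -⟩ := hF j k hjk
    refine CubePacking.disjoint_cubeC_iff.mpr ⟨i, ?_⟩
    rw [hs i j, hi]
    exact CubePacking.coe_ite_not (s i k) (α i)
  · have : NeZero n := ⟨hodd.pos.ne'⟩
    have hM := (CubePacking.isMatchingCover_reflectMatching (CubePacking.isUnit_two_zmod hodd)).comp
      (ZMod.finEquiv n).surjective
    obtain ⟨t, ht_inj, ht_disj⟩ := hM.exists_packing
    let e : Fin (n + 1) ≃ Option (ZMod n) := Fintype.equivOfCardEq (by simp)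
    have he_disj : ∀ j k, j ≠ k → Disjoint (cubeC (t (e j))) (cubeC (t (e k))) :=
      fun j k hjk => ht_disj _ _ (e.injective.ne hjk)
    refine ⟨t ∘ e, fun j k h => ?_, he_disj, fun u => ?_⟩
    · by_contra hjk
      exact (he_disj j k hjk).ne_of_mem (CubePacking.self_mem_cubeC _)
        (CubePacking.self_mem_cubeC _) h
    · obtain ⟨v, hv⟩ := CubePacking.exists_not_disjoint_cubeC (by simp) ht_inj u
      exact ⟨e.symm v, by simpa using hv⟩

theorem odd_dim_nonextensible_packing_from_one_factorization
    {n : ℕ} (hodd : Odd n) (hn : 3 ≤ n) :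
    -- the cubes coming from any one-factorization of `K_{n+1}` are pairwise disjoint
    (∀ (F : Fin n → Fin (n + 1) → Fin (n + 1)) (s : Fin n → Fin (n + 1) → Bool)
        (α : Fin n → ℝ),
      (∀ i j, F i j ≠ j) →                                  -- no fixed points
      (∀ i, Function.Involutive (F i)) →                    -- each `F i` is a matching
      (∀ j k, j ≠ k → ∃! i, F i j = k) →                    -- the matchings partition the edges
      (∀ i j, s i j = ! s i (F i j)) →                      -- `s i` picks a side of `F i`
      (∀ i, 0 < α i ∧ α i < 1) →
      ∀ j k : Fin (n + 1), j ≠ k →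
        Disjoint
          (cubeC (fun i => ((if s i j then α i else α i + 1 : ℝ) : AddCircle (2 : ℝ))))
          (cubeC (fun i => ((if s i k then α i else α i + 1 : ℝ) : AddCircle (2 : ℝ))))) ∧
    -- and for suitable choices one obtains a non-extensible packing with `n + 1` cubes
    (∃ t : Fin (n + 1) → Fin n → AddCircle (2 : ℝ),
      Function.Injective t ∧
      (∀ j k : Fin (n + 1), j ≠ k → Disjoint (cubeC (t j)) (cubeC (t k))) ∧
      (∀ u : Fin n → AddCircle (2 : ℝ), ∃ j, ¬ Disjoint (cubeC u) (cubeC (t j)))) :=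
  odd_dim_nonextensible_packing_from_one_factorization_general hodd
end

section
/- For every m ≥ 1, the complete graph K_{2m} admits a one-factorization: its edge set can be partitioned into 2m - 1 perfect matchings. -/
/-!
Identify `K_{2m}` with the complete graph on `Option G` for the cyclic group `G = ZMod (2m - 1)`,
the extra vertex `none` playing the role of `∞`. Colour the edge `{a, b}` by `a + b` and the edge
`{∞, a}` by `a + a`. At a vertex `a` the colours `a + b` (`b ≠ a`) are distinct and miss exactly
`a + a`, which is the colour of `{∞, a}`; at `∞` the colours `a + a` are distinct because doubling
is bijective in a group of odd order. So every colour class is a perfect matching.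
-/

theorem ZMod.bijective_add_self {n : ℕ} (hn : Odd n) :
    Function.Bijective fun a : ZMod n => a + a := by
  convert Units.mulLeft_bijective (ZMod.unitOfCoprime 2 (Nat.coprime_two_left.2 hn)) using 2
  simp [two_mul]

namespace SimpleGraph

variable {V W ι κ : Type*}

structure IsOneFactorColoring (c : V → V → ι) : Prop where
  symm : ∀ x y, c x y = c y x
  existsUnique_ne : ∀ x i, ∃! y, x ≠ y ∧ c x y = i

namespace IsOneFactorColoring

variable {c : V → V → ι}

theorem comp_equiv (hc : IsOneFactorColoring c) (e : W ≃ V) (f : ι ≃ κ) :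
    IsOneFactorColoring fun x y => f (c (e x) (e y)) where
  symm x y := by rw [hc.symm]
  existsUnique_ne x k := by
    simpa [e.injective.ne_iff, ← f.eq_symm_apply] using
      e.existsUnique_congr_right.2 (hc.existsUnique_ne (e x) (f.symm k))

def colorClass (hc : IsOneFactorColoring c) (i : ι) : SimpleGraph V where
  Adj x y := x ≠ y ∧ c x y = i
  symm := ⟨fun _ _ h => ⟨h.1.symm, (hc.symm _ _).trans h.2⟩⟩
  loopless := ⟨fun _ h => h.1 rfl⟩

theorem exists_oneFactorization (hc : IsOneFactorColoring c) :
    ∃ M : ι → (⊤ : SimpleGraph V).Subgraph,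
      (∀ i, (M i).IsPerfectMatching) ∧ ∀ u v, u ≠ v → ∃! i, (M i).Adj u v :=
  ⟨fun i => toSubgraph (hc.colorClass i) le_top,
    fun i => Subgraph.isPerfectMatching_iff.2 fun x => hc.existsUnique_ne x i,
    fun u v huv => ⟨c u v, ⟨huv, rfl⟩, fun _ h => h.2.symm⟩⟩

end IsOneFactorColoring

variable {G : Type*} [AddCommGroup G]

def waleckiColoring : Option G → Option G → G
  | some a, some b => a + b
  | some a, none | none, some a => a + a
  | none, none => 0

theorem isOneFactorColoring_waleckiColoring (hG : Function.Bijective fun a : G => a + a) :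
    IsOneFactorColoring (waleckiColoring (G := G)) where
  symm
    | some a, some b => add_comm a b
    | some _, none | none, some _ | none, none => rfl
  existsUnique_ne
    | none, i => by
      obtain ⟨b, hb, hb_unique⟩ := hG.existsUnique i
      refine ⟨some b, ⟨(Option.some_ne_none b).symm, hb⟩, ?_⟩
      rintro (_ | b') ⟨hne, h⟩
      · exact absurd rfl hne
      · exact congrArg some (hb_unique b' h)
    | some a, i => by
      by_cases hi : a + a = i
      · refine ⟨none, ⟨Option.some_ne_none a, hi⟩, ?_⟩
        rintro (_ | b) ⟨hne, h⟩
        · rfl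
        · exact absurd (congrArg some (add_left_cancel (h.trans hi.symm))).symm hne
      · refine ⟨some (i - a), ⟨fun h => hi ?_, add_sub_cancel a i⟩, ?_⟩
        · exact (congrArg (a + ·) (Option.some_inj.1 h)).trans (add_sub_cancel a i)
        · rintro (_ | b) ⟨hne, h⟩
          · exact absurd h hi
          · exact congrArg some (eq_sub_of_add_eq' h)

end SimpleGraph

theorem complete_graph_one_factorization_general (m : ℕ) :
    ∃ M : Fin (2 * m - 1) → (⊤ : SimpleGraph (Fin (2 * m))).Subgraph,
      (∀ i, (M i).IsPerfectMatching) ∧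
      (∀ u v : Fin (2 * m), u ≠ v → ∃! i, (M i).Adj u v) := by
  obtain _ | k := m
  · exact ⟨Fin.elim0, fun i => i.elim0, fun u => u.elim0⟩
  have vertices : Fin (2 * (k + 1)) ≃ Option (ZMod (2 * k + 1)) :=
    Fintype.equivOfCardEq (by simp [ZMod.card]; omega)
  have colors : ZMod (2 * k + 1) ≃ Fin (2 * (k + 1) - 1) :=
    Fintype.equivOfCardEq (by simp [ZMod.card]; omega)
  have walecki := SimpleGraph.isOneFactorColoring_waleckiColoring
    (ZMod.bijective_add_self (odd_two_mul_add_one k))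
  exact (walecki.comp_equiv vertices colors).exists_oneFactorization

/-- Walecki's theorem: for every `m ≥ 1` the complete graph `K_{2m}` admits a
one-factorization, i.e. its edge set is partitioned into `2m - 1` perfect matchings. -/
theorem complete_graph_one_factorization (m : ℕ) (hm : 1 ≤ m) :
    ∃ M : Fin (2 * m - 1) → (⊤ : SimpleGraph (Fin (2 * m))).Subgraph,
      (∀ i, (M i).IsPerfectMatching) ∧
      (∀ u v : Fin (2 * m), u ≠ v → ∃! i, (M i).Adj u v) :=
  complete_graph_one_factorization_general m
end
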